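/- arXiv:1708.01597 — 2 statements merged into one kernel-verified Lean document; each statement's English description precedes it below -/
import Mathlib

section
/- Integral estimate: Fix ϑ > 0 small and −1 < t < 1. Then there is a constant C > 1 (depending only on t and ϑ) such that for all ω = λ + iν with ν ≥ 0 and |ω| ≤ ϑ: (a) if λ > ν > 0 then C^{-1} λ^t/ν ≤ ∫_0^ϑ x^t/((x−λ)² + ν²) dx ≤ C λ^t/ν; (b) if λ < 0 and |λ| > ν then C^{-1} |ω|^{t−1} ≤ ∫_0^ϑ x^t/((x−λ)² + ν²) dx ≤ C |ω|^{t−1}, and |ω|^{t−1} is itself comparable to |λ|^{t−1}; (c) if ν > |λ| then C^{-1} ν^{t−1} ≤ ∫_0^ϑ x^t/((x−λ)² + ν²) dx ≤ C ν^{t−1}. -/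
/-!
If `lam < nu`, then on `x > 0` the denominator `(x - lam) ^ 2 + nu ^ 2` is within a factor `4` of
`x ^ 2 + r ^ 2`, `r = |ω|`, and the substitution `x = r u` turns `∫₀^ϑ x ^ t / (x ^ 2 + r ^ 2)` into
`r ^ (t - 1) ∫₀^(ϑ/r) u ^ t / (1 + u ^ 2)`; for `-1 < t < 1` the last integral lies between its
value on `(0, 1)` and its finite value on `(0, ∞)`. If `0 < nu < lam`, the integrand is
`≍ lam ^ t / nu ^ 2` on `(lam - nu/2, lam)`, which gives the lower bound. For the upper bound,
on `[lam/2, 2 lam]` one has `x ^ t ≍ lam ^ t` and the Cauchy kernel has total mass `π / nu`,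
while elsewhere the denominator is `≍ x ^ 2 + lam ^ 2`, reducing to the case `r = lam`, and
`lam ^ (t - 1) ≤ lam ^ t / nu`.
-/

open MeasureTheory Set

noncomputable section

namespace RMT

def Comparable (C x y : ℝ) : Prop := C⁻¹ * y ≤ x ∧ x ≤ C * y

namespace Comparable

variable {C C' C₁ C₂ x y z : ℝ}

lemma mono (h : Comparable C x y) (hC : 0 < C) (hCC' : C ≤ C') (hy : 0 ≤ y) :
    Comparable C' x y :=
  ⟨le_trans (by gcongr) h.1, h.2.trans (by gcongr)⟩

lemma trans (h₁ : Comparable C₁ x y) (h₂ : Comparable C₂ y z) (hC₁ : 0 ≤ C₁) :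
    Comparable (C₁ * C₂) x z := by
  refine ⟨?_, ?_⟩
  · calc (C₁ * C₂)⁻¹ * z = C₁⁻¹ * (C₂⁻¹ * z) := by rw [mul_inv]; ring
      _ ≤ C₁⁻¹ * y := by gcongr; exact h₂.1
      _ ≤ x := h₁.1
  · calc x ≤ C₁ * y := h₁.2
      _ ≤ C₁ * (C₂ * z) := by gcongr; exact h₂.2
      _ = C₁ * C₂ * z := by ring

lemma of_le_of_le {a b : ℝ} (ha : 0 < a) (hy : 0 ≤ y) (hlo : a * y ≤ x) (hhi : x ≤ b * y) :
    Comparable (max a⁻¹ b) x y := by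
  refine ⟨le_trans ?_ hlo, hhi.trans (by gcongr; exact le_max_right _ _)⟩
  gcongr
  exact inv_le_of_inv_le₀ ha (le_max_left _ _)

end Comparable

lemma comparable_rpow_of_le_of_le_two_mul {a b s : ℝ} (ha : 0 < a) (hab : a ≤ b)
    (hba : b ≤ 2 * a) (hs : s ≤ 0) : Comparable (2 ^ (-s)) (b ^ s) (a ^ s) := by
  have hb : 0 < b := ha.trans_le hab
  have h2 : (1 : ℝ) ≤ 2 ^ (-s) := Real.one_le_rpow (by norm_num) (by linarith)
  refine ⟨?_, ?_⟩
  · calc (2 ^ (-s))⁻¹ * a ^ s = (2 * a) ^ s := by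
          rw [Real.rpow_neg (by norm_num), inv_inv, Real.mul_rpow (by norm_num) ha.le]
      _ ≤ b ^ s := Real.rpow_le_rpow_of_nonpos hb hba hs
  · calc b ^ s ≤ a ^ s := Real.rpow_le_rpow_of_nonpos ha hab hs
      _ ≤ 2 ^ (-s) * a ^ s := le_mul_of_one_le_left (by positivity) h2

lemma comparable_rpow_of_mem_Icc {a x t : ℝ} (ha : 0 < a) (hx : x ∈ Icc (a / 2) (2 * a))
    (ht : |t| ≤ 1) : Comparable 2 (x ^ t) (a ^ t) := by
  have hx₀ : 0 < x := by linarith [hx.1]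
  have hlog : |Real.log x - Real.log a| ≤ Real.log 2 := by
    rw [← Real.log_div hx₀.ne' ha.ne', abs_le]
    constructor
    · rw [← Real.log_inv, Real.log_le_log_iff (by norm_num) (by positivity), le_div_iff₀ ha]
      linarith [hx.1]
    · rw [Real.log_le_log_iff (by positivity) (by norm_num), div_le_iff₀ ha]
      exact hx.2
  have hexp : |Real.log x * t - Real.log a * t| ≤ Real.log 2 := by
    rw [← sub_mul, abs_mul]
    nlinarith [abs_nonneg (Real.log x - Real.log a), abs_nonneg t, Real.log_nonneg one_le_two]
  rw [abs_le] at hexp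
  rw [Real.rpow_def_of_pos hx₀, Real.rpow_def_of_pos ha]
  refine ⟨?_, ?_⟩
  · rw [← Real.exp_log (show (0:ℝ) < 2⁻¹ by norm_num), ← Real.exp_add, Real.log_inv]
    exact Real.exp_le_exp.2 (by linarith)
  · rw [← Real.exp_log (show (0:ℝ) < 2 by norm_num), ← Real.exp_add]
    exact Real.exp_le_exp.2 (by linarith)

lemma comparable_div_of_le {C a D D' : ℝ} (hC : 0 < C) (ha : 0 ≤ a) (hD' : 0 < D')
    (h₁ : D' ≤ C * D) (h₂ : D ≤ C * D') : Comparable C (a / D) (a / D') := by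
  have hD : 0 < D := pos_of_mul_pos_right (hD'.trans_le h₁) hC.le
  refine ⟨?_, ?_⟩
  · rw [← div_eq_inv_mul, div_div, mul_comm]
    exact div_le_div_of_nonneg_left ha hD h₂
  · calc a / D ≤ a / (D' / C) :=
          div_le_div_of_nonneg_left ha (by positivity) (by rwa [div_le_iff₀' hC])
      _ = C * (a / D') := by field_simp

variable {t : ℝ}

lemma integrableOn_rpow_Ioo (ht : -1 < t) (c : ℝ) :
    IntegrableOn (fun x : ℝ => x ^ t) (Ioo 0 c) := by
  rcases le_or_gt c 0 with hc | hc
  · simp [Ioo_eq_empty_of_le hc]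
  · exact ((intervalIntegrable_iff_integrableOn_Ioc_of_le hc.le).1
      (intervalIntegral.intervalIntegrable_rpow' ht)).mono_set Ioo_subset_Ioc_self

lemma setIntegral_rpow_Ioo (ht : -1 < t) {c : ℝ} (hc : 0 ≤ c) :
    ∫ x in Ioo 0 c, x ^ t = c ^ (t + 1) / (t + 1) := by
  rw [← integral_Ioc_eq_integral_Ioo, ← intervalIntegral.integral_of_le hc,
    integral_rpow (Or.inl ht), Real.zero_rpow (by linarith), sub_zero]

lemma integrableOn_rpow_div_of_le (ht : -1 < t) {D : ℝ → ℝ} (hD : Measurable D) {c ε : ℝ}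
    (hε : 0 < ε) (hεD : ∀ x ∈ Ioo 0 c, ε ≤ D x) :
    IntegrableOn (fun x => x ^ t / D x) (Ioo 0 c) := by
  refine ((integrableOn_rpow_Ioo ht c).const_mul ε⁻¹).mono'
    ((measurable_id.pow_const t).div hD).aestronglyMeasurable ?_
  filter_upwards [ae_restrict_mem measurableSet_Ioo] with x hx
  have hxt : 0 ≤ x ^ t := Real.rpow_nonneg hx.1.le t
  rw [Real.norm_of_nonneg (div_nonneg hxt (hε.le.trans (hεD x hx))), div_eq_mul_inv, mul_comm]
  gcongr
  exact hεD x hx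

lemma comparable_setIntegral {C : ℝ} {f g : ℝ → ℝ} {s : Set ℝ} (hs : MeasurableSet s)
    (hf : IntegrableOn f s) (hg : IntegrableOn g s) (hfg : ∀ x ∈ s, Comparable C (f x) (g x)) :
    Comparable C (∫ x in s, f x) (∫ x in s, g x) := by
  refine ⟨?_, ?_⟩ <;> rw [← integral_const_mul]
  · exact setIntegral_mono_on (hg.const_mul _) hf hs fun x hx => (hfg x hx).1
  · exact setIntegral_mono_on hf (hg.const_mul _) hs fun x hx => (hfg x hx).2

lemma integrableOn_rpow_div_one_add_sq (ht₁ : -1 < t) (ht₂ : t < 1) :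
    IntegrableOn (fun u : ℝ => u ^ t / (1 + u ^ 2)) (Ioi 0) := by
  have hmeas : AEStronglyMeasurable (fun u : ℝ => u ^ t / (1 + u ^ 2)) :=
    ((measurable_id.pow_const t).div (by fun_prop)).aestronglyMeasurable
  rw [← Ioc_union_Ioi_eq_Ioi zero_le_one]
  refine IntegrableOn.union ?_ ?_
  · refine (((intervalIntegrable_iff_integrableOn_Ioc_of_le zero_le_one).1
      (intervalIntegral.intervalIntegrable_rpow' ht₁))).mono' hmeas.restrict ?_
    filter_upwards [ae_restrict_mem measurableSet_Ioc] with u hu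
    have hut : 0 ≤ u ^ t := Real.rpow_nonneg hu.1.le t
    rw [Real.norm_of_nonneg (by positivity)]
    exact div_le_self hut (by nlinarith)
  · refine (integrableOn_Ioi_rpow_of_lt (by linarith : t - 2 < -1) one_pos).mono'
      hmeas.restrict ?_
    filter_upwards [ae_restrict_mem measurableSet_Ioi] with u (hu : 1 < u)
    have hu₀ : 0 < u := one_pos.trans hu
    rw [Real.norm_of_nonneg (by positivity), Real.rpow_sub hu₀, Real.rpow_two]
    exact div_le_div_of_nonneg_left (by positivity) (by positivity) (by linarith)

lemma setIntegral_rpow_div_sq_add_sq {r c : ℝ} (hr : 0 < r) (hc : 0 ≤ c) :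
    ∫ x in Ioo 0 c, x ^ t / (x ^ 2 + r ^ 2)
      = r ^ (t - 1) * ∫ u in Ioo 0 (c / r), u ^ t / (1 + u ^ 2) := by
  simp only [← integral_Ioc_eq_integral_Ioo (y := c), ← integral_Ioc_eq_integral_Ioo (y := c / r),
    ← intervalIntegral.integral_of_le hc,
    ← intervalIntegral.integral_of_le (by positivity : 0 ≤ c / r)]
  have hscale : ∀ x ∈ uIcc 0 c,
      x ^ t / (x ^ 2 + r ^ 2) = r ^ (t - 2) * ((x / r) ^ t / (1 + (x / r) ^ 2)) := by
    intro x hx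
    rw [uIcc_of_le hc] at hx
    rw [Real.div_rpow hx.1 hr.le, Real.rpow_sub hr, Real.rpow_two]
    field_simp
    ring
  rw [intervalIntegral.integral_congr hscale, intervalIntegral.integral_const_mul,
    intervalIntegral.integral_comp_div (fun u => u ^ t / (1 + u ^ 2)) hr.ne', zero_div,
    smul_eq_mul, ← mul_assoc, show t - 1 = t - 2 + 1 by ring, Real.rpow_add_one hr.ne']

lemma exists_comparable_setIntegral_rpow_div_sq_add_sq (ht₁ : -1 < t) (ht₂ : t < 1) :
    ∃ C > 0, ∀ c r : ℝ, 0 < r → r ≤ c →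
      Comparable C (∫ x in Ioo 0 c, x ^ t / (x ^ 2 + r ^ 2)) (r ^ (t - 1)) := by
  have ht : 0 < t + 1 := by linarith
  set I : ℝ → ℝ := fun s => ∫ u in Ioo 0 s, u ^ t / (1 + u ^ 2)
  set K := ∫ u in Ioi (0 : ℝ), u ^ t / (1 + u ^ 2)
  have hint := integrableOn_rpow_div_one_add_sq ht₁ ht₂
  have hnonneg : ∀ s : Set ℝ, MeasurableSet s → s ⊆ Ioi 0 →
      0 ≤ᵐ[volume.restrict s] fun u : ℝ => u ^ t / (1 + u ^ 2) := fun s hs hs₀ =>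
    ae_restrict_of_forall_mem hs fun u hu =>
      div_nonneg (Real.rpow_nonneg (le_of_lt (hs₀ hu)) t) (by positivity)
  have hI_le : ∀ s, I s ≤ K := fun s =>
    setIntegral_mono_set hint (hnonneg _ measurableSet_Ioi subset_rfl)
      (Filter.Eventually.of_forall Ioo_subset_Ioi_self)
  have hI_ge : ∀ s, 1 ≤ s → ((2 * (t + 1))⁻¹ ≤ I s) := by
    intro s hs
    calc (2 * (t + 1))⁻¹ = ∫ u in Ioo 0 1, 2⁻¹ * u ^ t := by
          rw [integral_const_mul, setIntegral_rpow_Ioo ht₁ zero_le_one, Real.one_rpow, mul_inv,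
            one_div]
      _ ≤ I 1 := by
          refine setIntegral_mono_on ((integrableOn_rpow_Ioo ht₁ 1).const_mul _)
            (hint.mono_set Ioo_subset_Ioi_self) measurableSet_Ioo fun u hu => ?_
          rw [← div_eq_inv_mul]
          exact div_le_div_of_nonneg_left (Real.rpow_nonneg hu.1.le t) (by positivity)
            (by nlinarith [hu.1, hu.2])
      _ ≤ I s := setIntegral_mono_set (hint.mono_set Ioo_subset_Ioi_self)
          (hnonneg _ measurableSet_Ioo Ioo_subset_Ioi_self)
          (Filter.Eventually.of_forall (Ioo_subset_Ioo_right hs))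
  refine ⟨max (2 * (t + 1))⁻¹⁻¹ K, lt_max_of_lt_left (by positivity), fun c r hr hrc => ?_⟩
  have hJ := setIntegral_rpow_div_sq_add_sq (t := t) hr (hr.le.trans hrc)
  have hrt : 0 ≤ r ^ (t - 1) := Real.rpow_nonneg hr.le _
  refine Comparable.of_le_of_le (by positivity) hrt ?_ ?_ <;> rw [hJ, mul_comm _ (r ^ _)]
  · exact mul_le_mul_of_nonneg_left (hI_ge _ ((one_le_div hr).2 hrc)) hrt
  · exact mul_le_mul_of_nonneg_left (hI_le _) hrt

open ProbabilityTheory in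
lemma inv_sub_sq_add_sq_eq_cauchyPDFReal (lam : ℝ) {nu : ℝ} (hnu : 0 < nu) (x : ℝ) :
    ((x - lam) ^ 2 + nu ^ 2)⁻¹
      = Real.pi / nu * cauchyPDFReal lam nu.toNNReal x := by
  rw [cauchyPDFReal_def, Real.coe_toNNReal _ hnu.le]
  field_simp [Real.pi_pos.ne']

open ProbabilityTheory in
lemma integrable_inv_sub_sq_add_sq (lam : ℝ) {nu : ℝ} (hnu : 0 < nu) :
    Integrable fun x : ℝ => ((x - lam) ^ 2 + nu ^ 2)⁻¹ := by
  simp_rw [inv_sub_sq_add_sq_eq_cauchyPDFReal lam hnu]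
  exact (integrable_cauchyPDFReal lam).const_mul _

open ProbabilityTheory in
lemma setIntegral_inv_sub_sq_add_sq_le (s : Set ℝ) (lam : ℝ) {nu : ℝ} (hnu : 0 < nu) :
    ∫ x in s, ((x - lam) ^ 2 + nu ^ 2)⁻¹ ≤ Real.pi / nu := by
  simp_rw [inv_sub_sq_add_sq_eq_cauchyPDFReal lam hnu, integral_const_mul]
  refine mul_le_of_le_one_right (by positivity) ?_
  have hγ : nu.toNNReal ≠ 0 := (Real.toNNReal_pos.2 hnu).ne'
  rw [← integral_cauchyPDFReal_eq_one lam hγ]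
  exact setIntegral_le_integral (integrable_cauchyPDFReal lam)
    (Filter.Eventually.of_forall fun x => (cauchyPDF_pos lam hγ x).le)

lemma le_setIntegral_rpow_div_sub_sq_add_sq (ht₁ : -1 < t) (ht₂ : t < 1) {ϑ lam nu : ℝ}
    (hnu : 0 < nu) (hnl : nu < lam) (hlϑ : lam ≤ ϑ) :
    8⁻¹ * (lam ^ t / nu) ≤ ∫ x in Ioo 0 ϑ, x ^ t / ((x - lam) ^ 2 + nu ^ 2) := by
  have hlam : 0 < lam := hnu.trans hnl
  have hint : IntegrableOn (fun x => x ^ t / ((x - lam) ^ 2 + nu ^ 2)) (Ioo 0 ϑ) :=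
    integrableOn_rpow_div_of_le ht₁ (by fun_prop) (pow_pos hnu 2)
      fun x _ => le_add_of_nonneg_left (sq_nonneg _)
  have hbound : ∀ x ∈ Ioo (lam - nu / 2) lam,
      lam ^ t / (4 * nu ^ 2) ≤ x ^ t / ((x - lam) ^ 2 + nu ^ 2) := by
    intro x hx
    have hx' : x ∈ Icc (lam / 2) (2 * lam) := ⟨by linarith [hx.1], by linarith [hx.2]⟩
    calc lam ^ t / (4 * nu ^ 2) = 2⁻¹ * lam ^ t / (2 * nu ^ 2) := by ring
      _ ≤ x ^ t / ((x - lam) ^ 2 + nu ^ 2) :=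
          div_le_div₀ (Real.rpow_nonneg (by linarith [hx'.1]) t)
            (comparable_rpow_of_mem_Icc hlam hx' (abs_le.2 ⟨ht₁.le, ht₂.le⟩)).1
            (by positivity) (by nlinarith [hx.1, hx.2])
  calc 8⁻¹ * (lam ^ t / nu)
        = lam ^ t / (4 * nu ^ 2) * volume.real (Ioo (lam - nu / 2) lam) := by
        rw [Real.volume_real_Ioo_of_le (by linarith)]
        field_simp
        ring
    _ ≤ ∫ x in Ioo (lam - nu / 2) lam, x ^ t / ((x - lam) ^ 2 + nu ^ 2) :=
        setIntegral_ge_of_const_le_real measurableSet_Ioo measure_Ioo_lt_top.ne hbound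
          (hint.mono_set (Ioo_subset_Ioo (by linarith) hlϑ))
    _ ≤ ∫ x in Ioo 0 ϑ, x ^ t / ((x - lam) ^ 2 + nu ^ 2) :=
        setIntegral_mono_set hint
          (ae_restrict_of_forall_mem measurableSet_Ioo fun x hx =>
            div_nonneg (Real.rpow_nonneg hx.1.le t) (by positivity))
          (Filter.Eventually.of_forall (Ioo_subset_Ioo (by linarith) hlϑ))

lemma rpow_div_sub_sq_add_sq_le {x lam nu : ℝ} (hx : 0 < x) (hlam : 0 < lam) (ht : |t| ≤ 1) :
    x ^ t / ((x - lam) ^ 2 + nu ^ 2)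
      ≤ 8 * (x ^ t / (x ^ 2 + lam ^ 2)) + 2 * lam ^ t * ((x - lam) ^ 2 + nu ^ 2)⁻¹ := by
  have hxt : 0 ≤ x ^ t := Real.rpow_nonneg hx.le t
  by_cases hx' : x ∈ Icc (lam / 2) (2 * lam)
  · have hnear := (comparable_rpow_of_mem_Icc hlam hx' ht).2
    rw [div_eq_mul_inv]
    nlinarith [inv_nonneg.2 (add_nonneg (sq_nonneg (x - lam)) (sq_nonneg nu)),
      div_nonneg hxt (add_nonneg (sq_nonneg x) (sq_nonneg lam))]
  · have hfar : x ^ 2 + lam ^ 2 ≤ 8 * ((x - lam) ^ 2 + nu ^ 2) := by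
      simp only [mem_Icc, not_and_or, not_le] at hx'
      rcases hx' with h | h <;> nlinarith [sq_nonneg nu]
    have hD : 0 ≤ 2 * lam ^ t * ((x - lam) ^ 2 + nu ^ 2)⁻¹ := by positivity
    calc x ^ t / ((x - lam) ^ 2 + nu ^ 2) ≤ x ^ t / ((x ^ 2 + lam ^ 2) / 8) :=
          div_le_div_of_nonneg_left hxt (by positivity) (by linarith)
      _ = 8 * (x ^ t / (x ^ 2 + lam ^ 2)) := by field_simp
      _ ≤ _ := le_add_of_nonneg_right hD

lemma setIntegral_rpow_div_sub_sq_add_sq_le (ht₁ : -1 < t) (ht₂ : t < 1) {ϑ lam nu C : ℝ}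
    (hnu : 0 < nu) (hnl : nu < lam) (hC : 0 ≤ C)
    (hJ : ∫ x in Ioo 0 ϑ, x ^ t / (x ^ 2 + lam ^ 2) ≤ C * lam ^ (t - 1)) :
    ∫ x in Ioo 0 ϑ, x ^ t / ((x - lam) ^ 2 + nu ^ 2)
      ≤ (8 * C + 2 * Real.pi) * (lam ^ t / nu) := by
  have hlam : 0 < lam := hnu.trans hnl
  have hint : IntegrableOn (fun x => x ^ t / ((x - lam) ^ 2 + nu ^ 2)) (Ioo 0 ϑ) :=
    integrableOn_rpow_div_of_le ht₁ (by fun_prop) (pow_pos hnu 2)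
      fun x _ => le_add_of_nonneg_left (sq_nonneg _)
  have hintJ : IntegrableOn (fun x => x ^ t / (x ^ 2 + lam ^ 2)) (Ioo 0 ϑ) :=
    integrableOn_rpow_div_of_le ht₁ (by fun_prop) (pow_pos hlam 2)
      fun x _ => le_add_of_nonneg_left (sq_nonneg _)
  have hintK : IntegrableOn (fun x => 2 * lam ^ t * ((x - lam) ^ 2 + nu ^ 2)⁻¹) (Ioo 0 ϑ) :=
    (integrable_inv_sub_sq_add_sq lam hnu).integrableOn.const_mul _
  have hlam_le : lam ^ (t - 1) ≤ lam ^ t / nu := by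
    rw [Real.rpow_sub_one hlam.ne']
    exact div_le_div_of_nonneg_left (Real.rpow_nonneg hlam.le t) hnu hnl.le
  calc ∫ x in Ioo 0 ϑ, x ^ t / ((x - lam) ^ 2 + nu ^ 2)
      ≤ ∫ x in Ioo 0 ϑ, (8 * (x ^ t / (x ^ 2 + lam ^ 2))
          + 2 * lam ^ t * ((x - lam) ^ 2 + nu ^ 2)⁻¹) :=
        setIntegral_mono_on hint ((hintJ.const_mul 8).fun_add hintK) measurableSet_Ioo
          fun x hx => rpow_div_sub_sq_add_sq_le hx.1 hlam (abs_le.2 ⟨ht₁.le, ht₂.le⟩)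
    _ = 8 * (∫ x in Ioo 0 ϑ, x ^ t / (x ^ 2 + lam ^ 2))
          + 2 * lam ^ t * ∫ x in Ioo 0 ϑ, ((x - lam) ^ 2 + nu ^ 2)⁻¹ := by
        rw [integral_add (hintJ.const_mul 8) hintK, integral_const_mul, integral_const_mul]
    _ ≤ 8 * (C * (lam ^ t / nu)) + 2 * lam ^ t * (Real.pi / nu) := by
        gcongr
        · exact hJ.trans (by gcongr)
        · exact setIntegral_inv_sub_sq_add_sq_le _ lam hnu
    _ = (8 * C + 2 * Real.pi) * (lam ^ t / nu) := by ring

lemma exists_comparable_setIntegral_of_pos_of_lt (ht₁ : -1 < t) (ht₂ : t < 1) :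
    ∃ C > 0, ∀ ϑ lam nu : ℝ, 0 < nu → nu < lam → lam ≤ ϑ →
      Comparable C (∫ x in Ioo 0 ϑ, x ^ t / ((x - lam) ^ 2 + nu ^ 2)) (lam ^ t / nu) := by
  obtain ⟨C, hC, hJ⟩ := exists_comparable_setIntegral_rpow_div_sq_add_sq ht₁ ht₂
  refine ⟨max 8⁻¹⁻¹ (8 * C + 2 * Real.pi), by positivity, fun ϑ lam nu hnu hnl hlϑ => ?_⟩
  have hlam : 0 < lam := hnu.trans hnl
  exact Comparable.of_le_of_le (by norm_num) (by positivity)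
    (le_setIntegral_rpow_div_sub_sq_add_sq ht₁ ht₂ hnu hnl hlϑ)
    (setIntegral_rpow_div_sub_sq_add_sq_le ht₁ ht₂ hnu hnl hC.le (hJ ϑ lam hlam hlϑ).2)

lemma sq_add_le_four_mul_sub_sq_add_sq {x lam nu : ℝ} (hx : 0 ≤ x) (hln : lam ≤ nu) :
    x ^ 2 + (lam ^ 2 + nu ^ 2) ≤ 4 * ((x - lam) ^ 2 + nu ^ 2) := by
  rcases le_or_gt lam 0 with hlam | hlam
  · nlinarith [mul_nonneg hx (neg_nonneg.2 hlam)]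
  · nlinarith [sq_nonneg (3 * x - 4 * lam), mul_le_mul hln hln hlam.le (hlam.le.trans hln)]

lemma exists_comparable_setIntegral_of_lt (ht₁ : -1 < t) (ht₂ : t < 1) :
    ∃ C > 0, ∀ ϑ lam nu : ℝ, lam < nu → √(lam ^ 2 + nu ^ 2) ≤ ϑ →
      Comparable C (∫ x in Ioo 0 ϑ, x ^ t / ((x - lam) ^ 2 + nu ^ 2))
        (√(lam ^ 2 + nu ^ 2) ^ (t - 1)) := by
  obtain ⟨C, hC, hJ⟩ := exists_comparable_setIntegral_rpow_div_sq_add_sq ht₁ ht₂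
  refine ⟨4 * C, by positivity, fun ϑ lam nu hln hrϑ => ?_⟩
  set r := √(lam ^ 2 + nu ^ 2)
  have hr₀ : 0 < lam ^ 2 + nu ^ 2 := by
    nlinarith [pow_pos (sub_pos.2 hln) 2, sq_nonneg (lam + nu)]
  have hr : 0 < r := Real.sqrt_pos.2 hr₀
  have hr2 : r ^ 2 = lam ^ 2 + nu ^ 2 := Real.sq_sqrt hr₀.le
  have hlow : ∀ x ∈ Ioo (0 : ℝ) ϑ, x ^ 2 + r ^ 2 ≤ 4 * ((x - lam) ^ 2 + nu ^ 2) := fun x hx =>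
    hr2 ▸ sq_add_le_four_mul_sub_sq_add_sq hx.1.le hln.le
  have hhigh : ∀ x, (x - lam) ^ 2 + nu ^ 2 ≤ 4 * (x ^ 2 + r ^ 2) := fun x => by
    nlinarith [sq_nonneg (x + lam), sq_nonneg x]
  have hcomp : Comparable 4 (∫ x in Ioo 0 ϑ, x ^ t / ((x - lam) ^ 2 + nu ^ 2))
      (∫ x in Ioo 0 ϑ, x ^ t / (x ^ 2 + r ^ 2)) :=
    comparable_setIntegral measurableSet_Ioo
      (integrableOn_rpow_div_of_le ht₁ (by fun_prop) (by positivity : 0 < r ^ 2 / 4)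
        fun x hx => by nlinarith [hlow x hx, sq_nonneg x])
      (integrableOn_rpow_div_of_le ht₁ (by fun_prop) (pow_pos hr 2)
        fun x _ => le_add_of_nonneg_left (sq_nonneg x))
      fun x hx => comparable_div_of_le (by norm_num) (Real.rpow_nonneg hx.1.le t)
        (by positivity) (hlow x hx) (hhigh x)
  exact hcomp.trans (hJ ϑ r hr hrϑ) (by norm_num)

lemma comparable_rpow_sqrt_sq_add_sq {a b s : ℝ} (ha : a ≠ 0) (hba : |b| ≤ |a|) (hs : s ≤ 0) :
    Comparable (2 ^ (-s)) (√(a ^ 2 + b ^ 2) ^ s) (|a| ^ s) :=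
  comparable_rpow_of_le_of_le_two_mul (abs_pos.2 ha) (Real.abs_le_sqrt (by nlinarith))
    (Real.sqrt_le_iff.2 ⟨by positivity, by nlinarith [sq_abs a, sq_abs b, sq_le_sq.2 hba]⟩) hs

theorem edge_integral_estimate_general (ϑ t : ℝ) (ht₁ : -1 < t) (ht₂ : t < 1) :
    ∃ C : ℝ, 1 < C ∧ ∀ lam nu : ℝ, 0 ≤ nu → Real.sqrt (lam ^ 2 + nu ^ 2) ≤ ϑ →
      ((0 < nu → nu < lam →
        C⁻¹ * (lam ^ t / nu) ≤ (∫ x in Set.Ioo (0 : ℝ) ϑ, x ^ t / ((x - lam) ^ 2 + nu ^ 2)) ∧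
        (∫ x in Set.Ioo (0 : ℝ) ϑ, x ^ t / ((x - lam) ^ 2 + nu ^ 2)) ≤ C * (lam ^ t / nu)) ∧
      (lam < 0 → nu < |lam| →
        (C⁻¹ * Real.sqrt (lam ^ 2 + nu ^ 2) ^ (t - 1) ≤ (∫ x in Set.Ioo (0 : ℝ) ϑ, x ^ t / ((x - lam) ^ 2 + nu ^ 2)) ∧
         (∫ x in Set.Ioo (0 : ℝ) ϑ, x ^ t / ((x - lam) ^ 2 + nu ^ 2)) ≤ C * Real.sqrt (lam ^ 2 + nu ^ 2) ^ (t - 1)) ∧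
        (C⁻¹ * |lam| ^ (t - 1) ≤ Real.sqrt (lam ^ 2 + nu ^ 2) ^ (t - 1) ∧
         Real.sqrt (lam ^ 2 + nu ^ 2) ^ (t - 1) ≤ C * |lam| ^ (t - 1))) ∧
      (|lam| < nu →
        C⁻¹ * nu ^ (t - 1) ≤ (∫ x in Set.Ioo (0 : ℝ) ϑ, x ^ t / ((x - lam) ^ 2 + nu ^ 2)) ∧
        (∫ x in Set.Ioo (0 : ℝ) ϑ, x ^ t / ((x - lam) ^ 2 + nu ^ 2)) ≤ C * nu ^ (t - 1))) := by
  obtain ⟨Ca, hCa, hA⟩ := exists_comparable_setIntegral_of_pos_of_lt ht₁ ht₂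
  obtain ⟨Cb, hCb, hB⟩ := exists_comparable_setIntegral_of_lt ht₁ ht₂
  have hs : t - 1 ≤ 0 := by linarith
  set K : ℝ := 2 ^ (-(t - 1))
  have hK : 1 ≤ K := Real.one_le_rpow one_le_two (by linarith)
  refine ⟨(Ca + Cb + 1) * K, by nlinarith, fun lam nu hnu hωϑ =>
    ⟨fun hnu₀ hnl => ?_, fun hlam hnl => ?_, fun hln => ?_⟩⟩
  · have hlϑ : lam ≤ ϑ := (le_abs_self lam).trans ((Real.abs_le_sqrt (by nlinarith)).trans hωϑ)
    exact (hA ϑ lam nu hnu₀ hnl hlϑ).mono hCa (by nlinarith)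
      (div_nonneg (Real.rpow_nonneg (hnu₀.trans hnl).le t) hnu₀.le)
  · exact ⟨(hB ϑ lam nu (hlam.trans_le hnu) hωϑ).mono hCb (by nlinarith) (by positivity),
      (comparable_rpow_sqrt_sq_add_sq hlam.ne (by rw [abs_of_nonneg hnu]; exact hnl.le) hs).mono
        (by positivity) (by nlinarith) (by positivity)⟩
  · have hnu₀ : 0 < nu := (abs_nonneg lam).trans_lt hln
    have hr := comparable_rpow_sqrt_sq_add_sq (b := lam) hnu₀.ne'
      (by rw [abs_of_pos hnu₀]; exact hln.le) hs
    rw [add_comm (nu ^ 2), abs_of_pos hnu₀] at hr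
    exact ((hB ϑ lam nu ((le_abs_self lam).trans_lt hln) hωϑ).trans hr hCb.le).mono
      (by positivity) (by nlinarith) (Real.rpow_nonneg hnu₀.le _)

/-- **Integral estimate** (Lemma 3.4): two-sided bounds for
`∫_0^ϑ x^t ((x-λ)² + ν²)⁻¹ dx` in the three regimes of `ω = λ + iν`. -/
theorem edge_integral_estimate (ϑ t : ℝ) (hϑ : 0 < ϑ) (ht₁ : -1 < t) (ht₂ : t < 1) :
    ∃ C : ℝ, 1 < C ∧ ∀ lam nu : ℝ, 0 ≤ nu → Real.sqrt (lam ^ 2 + nu ^ 2) ≤ ϑ →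
      ((0 < nu → nu < lam →
        C⁻¹ * (lam ^ t / nu) ≤ (∫ x in Set.Ioo (0 : ℝ) ϑ, x ^ t / ((x - lam) ^ 2 + nu ^ 2)) ∧
        (∫ x in Set.Ioo (0 : ℝ) ϑ, x ^ t / ((x - lam) ^ 2 + nu ^ 2)) ≤ C * (lam ^ t / nu)) ∧
      (lam < 0 → nu < |lam| →
        (C⁻¹ * Real.sqrt (lam ^ 2 + nu ^ 2) ^ (t - 1) ≤ (∫ x in Set.Ioo (0 : ℝ) ϑ, x ^ t / ((x - lam) ^ 2 + nu ^ 2)) ∧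
         (∫ x in Set.Ioo (0 : ℝ) ϑ, x ^ t / ((x - lam) ^ 2 + nu ^ 2)) ≤ C * Real.sqrt (lam ^ 2 + nu ^ 2) ^ (t - 1)) ∧
        (C⁻¹ * |lam| ^ (t - 1) ≤ Real.sqrt (lam ^ 2 + nu ^ 2) ^ (t - 1) ∧
         Real.sqrt (lam ^ 2 + nu ^ 2) ^ (t - 1) ≤ C * |lam| ^ (t - 1))) ∧
      (|lam| < nu →
        C⁻¹ * nu ^ (t - 1) ≤ (∫ x in Set.Ioo (0 : ℝ) ϑ, x ^ t / ((x - lam) ^ 2 + nu ^ 2)) ∧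
        (∫ x in Set.Ioo (0 : ℝ) ϑ, x ^ t / ((x - lam) ^ 2 + nu ^ 2)) ≤ C * nu ^ (t - 1))) :=
  edge_integral_estimate_general ϑ t ht₁ ht₂

end RMT
end
end

section
/- Stability of the subordination system for large imaginary part: Let μ₁, μ₂ be Borel probability measures on ℝ that are not single point masses, define Φ₁(ω₁,ω₂,z) = F_{μ₁}(ω₂) − ω₁ − ω₂ + z and Φ₂(ω₁,ω₂,z) = F_{μ₂}(ω₁) − ω₁ − ω₂ + z, and let ω₁, ω₂ be the subordination functions of (μ₁, μ₂). Let η̃₀ > 0 and let ω̃₁, ω̃₂, r̃₁, r̃₂ be analytic functions on ℂ_{η̃₀} = {z ∈ ℂ : Im z ≥ η̃₀} such that, for some constant C > 0 and all z ∈ ℂ_{η̃₀}: |Im ω̃₁(z) − Im z| ≤ C, |Im ω̃₂(z) − Im z| ≤ C, |r̃₁(z)| ≤ C, |r̃₂(z)| ≤ C, and Φ₁(ω̃₁(z), ω̃₂(z), z) = r̃₁(z), Φ₂(ω̃₁(z), ω̃₂(z), z) = r̃₂(z). Then there is a constant η₀ ≥ η̃₀ such that |ω̃₁(z) − ω₁(z)|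 ≤ 2‖(r̃₁(z), r̃₂(z))‖ and |ω̃₂(z) − ω₂(z)| ≤ 2‖(r̃₁(z), r̃₂(z))‖ for all z with Im z ≥ η₀, where ‖·‖ is the Euclidean norm on ℂ². -/
open MeasureTheory Complex Filter Matrix Set Topology

noncomputable section

namespace RMT

/-- The open upper half-plane. -/
def UHP : Set ℂ := {z : ℂ | 0 < z.im}

/-- Stieltjes transform of a measure on `ℝ`. -/
def stT (μ : Measure ℝ) (z : ℂ) : ℂ := ∫ x, ((x : ℂ) - z)⁻¹ ∂μ

/-- Negative reciprocal Stieltjes transform. -/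
def Fm (μ : Measure ℝ) (z : ℂ) : ℂ := -(stT μ z)⁻¹

/-- `ω₁, ω₂` are the subordination functions of the pair `(μ₁, μ₂)`. -/
structure IsSubordination (μ₁ μ₂ : Measure ℝ) (ω₁ ω₂ : ℂ → ℂ) : Prop where
  diff₁ : DifferentiableOn ℂ ω₁ UHP
  diff₂ : DifferentiableOn ℂ ω₂ UHP
  imge₁ : ∀ z ∈ UHP, z.im ≤ (ω₁ z).im
  imge₂ : ∀ z ∈ UHP, z.im ≤ (ω₂ z).im
  lim₁ : Tendsto (fun η : ℝ => ω₁ ((η : ℂ) * Complex.I) / ((η : ℂ) * Complex.I)) atTop (nhds 1)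
  lim₂ : Tendsto (fun η : ℝ => ω₂ ((η : ℂ) * Complex.I) / ((η : ℂ) * Complex.I)) atTop (nhds 1)
  subeq : ∀ z ∈ UHP, Fm μ₁ (ω₂ z) = Fm μ₂ (ω₁ z)
  sumeq : ∀ z ∈ UHP, Fm μ₁ (ω₂ z) = ω₁ z + ω₂ z - z

/-- `ν` is the free additive convolution `μ₁ ⊞ μ₂`, witnessed by the subordination
functions `ω₁, ω₂`. -/
structure IsFreeConv (μ₁ μ₂ ν : Measure ℝ) (ω₁ ω₂ : ℂ → ℂ) : Prop where
  sub : IsSubordination μ₁ μ₂ ω₁ ω₂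
  prob : IsProbabilityMeasure ν
  conv : ∀ z ∈ UHP, Fm ν z = Fm μ₁ (ω₂ z)

/-- Support of a Borel measure on `ℝ`. -/
def msupp (μ : Measure ℝ) : Set ℝ := {x : ℝ | ∀ ε > 0, μ (Set.Ioo (x - ε) (x + ε)) ≠ 0}


/-!
For a probability measure `μ` and `w₁, w₂` in the upper half-plane,
`F(w₁) - F(w₂) = K (w₁ - w₂)` with `K = ∫ (x - w₁)⁻¹ (x - w₂)⁻¹ dμ / (m(w₁) m(w₂))`, and
Cauchy–Schwarz for the covariance of the two resolvents gives
`|K - 1|² Im w₁ Im w₂ ≤ (Im F(w₁) - Im w₁) (Im F(w₂) - Im w₂)`. Subtracting the exact from the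
perturbed subordination equations therefore yields a coupled linear system
`|ω̃₁ - ω₁| ≤ a |ω̃₂ - ω₂| + |r̃₁|`, `|ω̃₂ - ω₂| ≤ b |ω̃₁ - ω₁| + |r̃₂|` whose coefficients obey
`a² (η - C) Im ω₂ ≤ 2C (Im ω₁ - η)` and its mirror image. Multiplying the two gives `ab = O(C/η)`,
hence an a priori bound on `Im ω₁ - η`, which in turn forces `a, b ≤ 1/2` once `η ≥ 8C`; the
system then solves to the claimed bound.
-/

section SecondMoments

variable {α 𝕜 : Type*} [RCLike 𝕜] [MeasurableSpace α] {μ : Measure α}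

theorem norm_integral_mul_sq_le {f g : α → 𝕜} (hf : MemLp f 2 μ) (hg : MemLp g 2 μ) :
    ‖∫ x, f x * g x ∂μ‖ ^ 2 ≤ (∫ x, ‖f x‖ ^ 2 ∂μ) * ∫ x, ‖g x‖ ^ 2 ∂μ := by
  have hölder := integral_mul_norm_le_Lp_mul_Lq (f := f) (g := g) (μ := μ)
    Real.HolderConjugate.two_two (by rwa [ENNReal.ofReal_ofNat]) (by rwa [ENNReal.ofReal_ofNat])
  simp only [Real.rpow_two] at hölder
  calc ‖∫ x, f x * g x ∂μ‖ ^ 2 ≤ (∫ x, ‖f x‖ * ‖g x‖ ∂μ) ^ 2 := by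
        gcongr
        simpa only [norm_mul] using norm_integral_le_integral_norm (fun x => f x * g x)
    _ ≤ (√(∫ x, ‖f x‖ ^ 2 ∂μ) * √(∫ x, ‖g x‖ ^ 2 ∂μ)) ^ 2 := by
        rw [Real.sqrt_eq_rpow, Real.sqrt_eq_rpow]
        gcongr
    _ = (∫ x, ‖f x‖ ^ 2 ∂μ) * ∫ x, ‖g x‖ ^ 2 ∂μ := by
        rw [mul_pow,
          Real.sq_sqrt (integral_nonneg fun x => by positivity),
          Real.sq_sqrt (integral_nonneg fun x => by positivity)]

variable [IsProbabilityMeasure μ]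

theorem integral_sub_integral_mul_sub_integral {f g : α → 𝕜} (hf : MemLp f 2 μ)
    (hg : MemLp g 2 μ) :
    ∫ x, (f x - ∫ y, f y ∂μ) * (g x - ∫ y, g y ∂μ) ∂μ
      = ∫ x, f x * g x ∂μ - (∫ x, f x ∂μ) * ∫ x, g x ∂μ := by
  set m := ∫ y, f y ∂μ
  set n := ∫ y, g y ∂μ
  have hfg : Integrable (fun x => f x * g x) μ := hf.integrable_mul hg
  have hf₁ : Integrable f μ := hf.integrable one_le_two
  have hg₁ : Integrable g μ := hg.integrable one_le_two
  have h₁ : Integrable (fun x => f x * g x - n * f x) μ := hfg.sub (hf₁.const_mul n)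
  have h₂ : Integrable (fun x => f x * g x - n * f x - m * g x) μ := h₁.sub (hg₁.const_mul m)
  have hexpand : ∀ x, (f x - m) * (g x - n) = f x * g x - n * f x - m * g x + m * n := by
    intro x; ring
  simp_rw [hexpand]
  rw [integral_add h₂ (integrable_const _), integral_sub h₁ (hg₁.const_mul m),
    integral_sub hfg (hf₁.const_mul n), integral_const_mul, integral_const_mul, integral_const]
  simp only [probReal_univ, one_smul]
  ring

theorem integral_norm_sub_integral_sq {f : α → 𝕜} (hf : MemLp f 2 μ) :
    ∫ x, ‖f x - ∫ y, f y ∂μ‖ ^ 2 ∂μ = ∫ x, ‖f x‖ ^ 2 ∂μ - ‖∫ x, f x ∂μ‖ ^ 2 := by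
  have h := integral_sub_integral_mul_sub_integral hf hf.star
  simp only [Pi.star_apply, RCLike.star_def, integral_conj, ← map_sub, RCLike.mul_conj] at h
  apply_fun ((↑) : ℝ → 𝕜) using RCLike.ofReal_injective
  rw [RCLike.ofReal_sub, ← integral_ofReal, ← integral_ofReal]
  push_cast
  exact h

end SecondMoments

section Stieltjes

variable {μ : Measure ℝ} {w w₁ w₂ : ℂ}

theorem ofReal_sub_ne_zero_of_im_pos (hw : 0 < w.im) (x : ℝ) : (x : ℂ) - w ≠ 0 := by
  intro h
  have := congrArg Complex.im h
  simp only [sub_im, ofReal_im, zero_sub, zero_im, neg_eq_zero] at this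
  exact hw.ne' this

theorem norm_inv_ofReal_sub_le (hw : 0 < w.im) (x : ℝ) : ‖((x : ℂ) - w)⁻¹‖ ≤ w.im⁻¹ := by
  rw [norm_inv]
  refine inv_anti₀ hw ?_
  simpa [abs_of_pos hw] using Complex.abs_im_le_norm ((x : ℂ) - w)

theorem im_inv_ofReal_sub (w : ℂ) (x : ℝ) :
    (((x : ℂ) - w)⁻¹).im = w.im * ‖((x : ℂ) - w)⁻¹‖ ^ 2 := by
  rw [Complex.inv_im, norm_inv, inv_pow, Complex.sq_norm]
  simp only [sub_im, ofReal_im, zero_sub, neg_neg]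
  ring

theorem memLp_inv_ofReal_sub [IsFiniteMeasure μ] (hw : 0 < w.im) (p : ENNReal) :
    MemLp (fun x : ℝ => ((x : ℂ) - w)⁻¹) p μ :=
  .of_bound ((continuous_ofReal.sub continuous_const).inv₀
      (ofReal_sub_ne_zero_of_im_pos hw)).aestronglyMeasurable
    _ (ae_of_all _ (norm_inv_ofReal_sub_le hw))

theorem im_stT [IsFiniteMeasure μ] (hw : 0 < w.im) :
    (stT μ w).im = w.im * ∫ x, ‖((x : ℂ) - w)⁻¹‖ ^ 2 ∂μ := by
  have h := integral_im ((memLp_inv_ofReal_sub (μ := μ) hw 1).integrable le_rfl)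
  simp only [RCLike.im_to_complex, im_inv_ofReal_sub] at h
  rw [stT, ← h, integral_const_mul]

theorem stT_ne_zero [IsProbabilityMeasure μ] (hw : 0 < w.im) : stT μ w ≠ 0 := by
  have hpos : 0 < ∫ x, ‖((x : ℂ) - w)⁻¹‖ ^ 2 ∂μ := by
    rw [integral_pos_iff_support_of_nonneg (fun x => by positivity)
      ((memLp_two_iff_integrable_sq_norm (memLp_inv_ofReal_sub hw 2).1).1
        (memLp_inv_ofReal_sub hw 2))]
    have hsupp : Function.support (fun x : ℝ => ‖((x : ℂ) - w)⁻¹‖ ^ 2) = univ := by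
      ext x
      simpa using ofReal_sub_ne_zero_of_im_pos hw x
    simp only [hsupp, measure_univ, zero_lt_one]
  intro h
  have := im_stT (μ := μ) hw
  rw [h, zero_im] at this
  nlinarith [mul_pos hw hpos]

theorem stT_sub_stT [IsFiniteMeasure μ] (h₁ : 0 < w₁.im) (h₂ : 0 < w₂.im) :
    stT μ w₁ - stT μ w₂ = (w₁ - w₂) * ∫ x, ((x : ℂ) - w₁)⁻¹ * ((x : ℂ) - w₂)⁻¹ ∂μ := by
  rw [stT, stT, ← integral_sub ((memLp_inv_ofReal_sub h₁ 1).integrable le_rfl)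
    ((memLp_inv_ofReal_sub h₂ 1).integrable le_rfl), ← integral_const_mul]
  congr 1 with x
  have := ofReal_sub_ne_zero_of_im_pos h₁ x
  have := ofReal_sub_ne_zero_of_im_pos h₂ x
  field_simp
  ring

theorem im_Fm_sub_im [IsProbabilityMeasure μ] (hw : 0 < w.im) :
    (Fm μ w).im - w.im
      = w.im * (∫ x, ‖((x : ℂ) - w)⁻¹ - stT μ w‖ ^ 2 ∂μ) / ‖stT μ w‖ ^ 2 := by
  have hm : ‖stT μ w‖ ≠ 0 := norm_ne_zero_iff.2 (stT_ne_zero hw)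
  rw [stT, integral_norm_sub_integral_sq (memLp_inv_ofReal_sub hw 2), ← stT, Fm, neg_im,
    inv_im, ← Complex.sq_norm, im_stT hw]
  field_simp

theorem exists_Fm_sub_Fm_eq_mul_sub (μ : Measure ℝ) [IsProbabilityMeasure μ]
    (h₁ : 0 < w₁.im) (h₂ : 0 < w₂.im) :
    ∃ K : ℂ, Fm μ w₁ - Fm μ w₂ = K * (w₁ - w₂) ∧
      ‖K - 1‖ ^ 2 * (w₁.im * w₂.im) ≤ ((Fm μ w₁).im - w₁.im) * ((Fm μ w₂).im - w₂.im) := by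
  set g₁ : ℝ → ℂ := fun x => ((x : ℂ) - w₁)⁻¹
  set g₂ : ℝ → ℂ := fun x => ((x : ℂ) - w₂)⁻¹
  have hm₁ := stT_ne_zero (μ := μ) h₁
  have hm₂ := stT_ne_zero (μ := μ) h₂
  set J := ∫ x, g₁ x * g₂ x ∂μ
  refine ⟨J / (stT μ w₁ * stT μ w₂), ?_, ?_⟩
  · rw [Fm, Fm, div_mul_eq_mul_div]
    field_simp
    linear_combination stT_sub_stT (μ := μ) h₁ h₂
  · have hcov : ∫ x, (g₁ x - stT μ w₁) * (g₂ x - stT μ w₂) ∂μ = J - stT μ w₁ * stT μ w₂ :=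
      integral_sub_integral_mul_sub_integral (memLp_inv_ofReal_sub h₁ 2)
        (memLp_inv_ofReal_sub h₂ 2)
    have hK : J / (stT μ w₁ * stT μ w₂) - 1
        = (J - stT μ w₁ * stT μ w₂) / (stT μ w₁ * stT μ w₂) := by
      field_simp
    have hcs : ‖J - stT μ w₁ * stT μ w₂‖ ^ 2
        ≤ (∫ x, ‖g₁ x - stT μ w₁‖ ^ 2 ∂μ) * ∫ x, ‖g₂ x - stT μ w₂‖ ^ 2 ∂μ :=
      hcov ▸ norm_integral_mul_sq_le ((memLp_inv_ofReal_sub h₁ 2).sub (memLp_const _))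
        ((memLp_inv_ofReal_sub h₂ 2).sub (memLp_const _))
    rw [im_Fm_sub_im h₁, im_Fm_sub_im h₂, hK, norm_div, norm_mul, div_pow, mul_pow]
    calc _ ≤ (∫ x, ‖g₁ x - stT μ w₁‖ ^ 2 ∂μ) * (∫ x, ‖g₂ x - stT μ w₂‖ ^ 2 ∂μ)
          / (‖stT μ w₁‖ ^ 2 * ‖stT μ w₂‖ ^ 2) * (w₁.im * w₂.im) := by gcongr
      _ = _ := by ring

end Stieltjes

section Bootstrap

variable {a b h s η x y y₁ y₂ A C R R₁ R₂ : ℝ}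

theorem one_sub_mul_mul_le {B : ℝ} (ha : 0 ≤ a) (hA : A ≤ a * B + R₁) (hB : B ≤ b * A + R₂) :
    (1 - a * b) * A ≤ a * R₂ + R₁ := by
  nlinarith [mul_le_mul_of_nonneg_left hB ha]

theorem mul_mul_le_of_sq_mul_le (ha : 0 ≤ a) (hb : 0 ≤ b) (hh : 0 ≤ h) (hs : 0 ≤ s)
    (hη : 0 < η) (hy₁ : η ≤ y₁) (hy₂ : η ≤ y₂)
    (ha₂ : a ^ 2 * (h * y₂) ≤ s * (y₁ - η)) (hb₂ : b ^ 2 * (h * y₁) ≤ s * (y₂ - η)) :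
    a * b * h ≤ s := by
  have hy : 0 < y₁ * y₂ := mul_pos (by linarith) (by linarith)
  have hprod : (a * b * h) ^ 2 * (y₁ * y₂) ≤ s ^ 2 * (y₁ * y₂) :=
    calc (a * b * h) ^ 2 * (y₁ * y₂) = (a ^ 2 * (h * y₂)) * (b ^ 2 * (h * y₁)) := by ring
      _ ≤ (s * (y₁ - η)) * (s * (y₂ - η)) :=
        mul_le_mul ha₂ hb₂ (mul_nonneg (sq_nonneg b) (mul_nonneg hh (by linarith)))
          (mul_nonneg hs (by linarith))
      _ = s ^ 2 * ((y₁ - η) * (y₂ - η)) := by ring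
      _ ≤ s ^ 2 * (y₁ * y₂) := by gcongr <;> linarith
  exact (pow_le_pow_iff_left₀ (by positivity) hs two_ne_zero).1 (le_of_mul_le_mul_right hprod hy)

theorem le_half_of_sq_mul_le (hC : 0 < C) (hη : 8 * C ≤ η) (ha : 0 ≤ a) (hA₀ : 0 ≤ A)
    (hab : a * b ≤ 1 / 2) (hA : (1 - a * b) * A ≤ a * R₂ + R₁) (hR₁ : R₁ ≤ C) (hR₂ : R₂ ≤ C)
    (hy : η ≤ y) (hx : x ≤ A + C) (hsq : a ^ 2 * ((η - C) * y) ≤ 2 * C * x) :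
    a ≤ 1 / 2 := by
  have hA₁ : A ≤ 2 * (a + 1) * C := by nlinarith [mul_le_mul_of_nonneg_left hR₂ ha]
  have hquad : a ^ 2 * (56 * C ^ 2) ≤ (2 * a + 3) * (2 * C ^ 2) :=
    calc a ^ 2 * (56 * C ^ 2) = a ^ 2 * ((7 * C) * (8 * C)) := by ring
      _ ≤ a ^ 2 * ((η - C) * y) := by gcongr <;> linarith
      _ ≤ 2 * C * x := hsq
      _ ≤ 2 * C * (2 * (a + 1) * C + C) := by gcongr; linarith
      _ = (2 * a + 3) * (2 * C ^ 2) := by ring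
  have : 28 * a ^ 2 ≤ 2 * a + 3 :=
    le_of_mul_le_mul_right (by linarith) (by positivity : 0 < 2 * C ^ 2)
  nlinarith

theorem le_two_mul_of_one_sub_mul_mul_le (ha' : a ≤ 1 / 2) (hb : 0 ≤ b)
    (hb' : b ≤ 1 / 2) (hA₀ : 0 ≤ A) (hA : (1 - a * b) * A ≤ a * R₂ + R₁) (hR₁ : R₁ ≤ R)
    (hR₂ : R₂ ≤ R) (hR₂₀ : 0 ≤ R₂) : A ≤ 2 * R := by
  nlinarith [mul_le_mul ha' hb' hb (by norm_num), mul_le_mul_of_nonneg_right ha' hR₂₀]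

end Bootstrap

section Subordination

variable {z ω₁ ω₂ ωt₁ ωt₂ : ℂ} {C : ℝ}

theorem im_sub_im_le_norm_sub_add (h : |ωt₁.im - z.im| ≤ C) : ω₁.im - z.im ≤ ‖ωt₁ - ω₁‖ + C := by
  have := Complex.abs_im_le_norm (ωt₁ - ω₁)
  rw [sub_im] at this
  linarith [abs_le.1 h, abs_le.1 this]

theorem exists_norm_sub_le_and_sq_mul_le (μ : Measure ℝ) [IsProbabilityMeasure μ] {r : ℂ}
    (hzC : C < z.im) (hω₁ : z.im ≤ ω₁.im) (hω₂ : z.im ≤ ω₂.im)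
    (hωt₁ : |ωt₁.im - z.im| ≤ C) (hωt₂ : |ωt₂.im - z.im| ≤ C) (hr : ‖r‖ ≤ C)
    (hF : Fm μ ω₂ = ω₁ + ω₂ - z) (hFt : Fm μ ωt₂ - ωt₁ - ωt₂ + z = r) :
    ∃ a : ℝ, 0 ≤ a ∧ ‖ωt₁ - ω₁‖ ≤ a * ‖ωt₂ - ω₂‖ + ‖r‖ ∧
      a ^ 2 * ((z.im - C) * ω₂.im) ≤ 2 * C * (ω₁.im - z.im) := by
  have hz : 0 < z.im := by linarith [norm_nonneg r]
  have hωt₂' : z.im - C ≤ ωt₂.im := by linarith [abs_le.1 hωt₂]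
  obtain ⟨K, hK, hKle⟩ := exists_Fm_sub_Fm_eq_mul_sub μ (by linarith : 0 < ωt₂.im)
    (by linarith : 0 < ω₂.im)
  refine ⟨‖K - 1‖, norm_nonneg _, ?_, ?_⟩
  · have hdiff : ωt₁ - ω₁ = (K - 1) * (ωt₂ - ω₂) - r := by linear_combination hK - hFt + hF
    rw [hdiff, ← norm_mul]
    exact norm_sub_le _ _
  · have hFt' : (Fm μ ωt₂).im - ωt₂.im = r.im + ωt₁.im - z.im := by
      rw [← hFt]; simp only [add_im, sub_im]; ring
    have hF' : (Fm μ ω₂).im - ω₂.im = ω₁.im - z.im := by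
      rw [hF]; simp only [add_im, sub_im]; ring
    calc ‖K - 1‖ ^ 2 * ((z.im - C) * ω₂.im) ≤ ‖K - 1‖ ^ 2 * (ωt₂.im * ω₂.im) := by
          gcongr; linarith
      _ ≤ (r.im + ωt₁.im - z.im) * (ω₁.im - z.im) := by rw [← hFt', ← hF']; exact hKle
      _ ≤ 2 * C * (ω₁.im - z.im) := by
          gcongr
          linarith [abs_le.1 hωt₁, (Complex.im_le_norm r).trans hr]

end Subordination

theorem norm_sub_subordination_le (μ₁ μ₂ : Measure ℝ) [IsProbabilityMeasure μ₁]
    [IsProbabilityMeasure μ₂] {z ω₁ ω₂ ωt₁ ωt₂ r₁ r₂ : ℂ} {C : ℝ} (hC : 0 < C)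
    (hz : 8 * C ≤ z.im) (hω₁ : z.im ≤ ω₁.im) (hω₂ : z.im ≤ ω₂.im)
    (hF₁ : Fm μ₁ ω₂ = ω₁ + ω₂ - z) (hF₂ : Fm μ₂ ω₁ = ω₁ + ω₂ - z)
    (hωt₁ : |ωt₁.im - z.im| ≤ C) (hωt₂ : |ωt₂.im - z.im| ≤ C) (hr₁ : ‖r₁‖ ≤ C) (hr₂ : ‖r₂‖ ≤ C)
    (hFt₁ : Fm μ₁ ωt₂ - ωt₁ - ωt₂ + z = r₁) (hFt₂ : Fm μ₂ ωt₁ - ωt₁ - ωt₂ + z = r₂) :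
    ‖ωt₁ - ω₁‖ ≤ 2 * √(‖r₁‖ ^ 2 + ‖r₂‖ ^ 2) ∧ ‖ωt₂ - ω₂‖ ≤ 2 * √(‖r₁‖ ^ 2 + ‖r₂‖ ^ 2) := by
  have hzC : C < z.im := by linarith
  obtain ⟨a, ha, hA, ha₂⟩ :=
    exists_norm_sub_le_and_sq_mul_le μ₁ hzC hω₁ hω₂ hωt₁ hωt₂ hr₁ hF₁ hFt₁
  obtain ⟨b, hb, hB, hb₂⟩ := exists_norm_sub_le_and_sq_mul_le μ₂ hzC hω₂ hω₁ hωt₂ hωt₁ hr₂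
    (by rw [hF₂]; ring) (by rw [← hFt₂]; ring)
  have hab : a * b ≤ 1 / 2 := by
    have := mul_mul_le_of_sq_mul_le ha hb (by linarith) (by linarith) (by linarith) hω₁ hω₂
      ha₂ hb₂
    nlinarith
  have hA' := one_sub_mul_mul_le ha hA hB
  have hB' := one_sub_mul_mul_le hb hB hA
  have hba : b * a ≤ 1 / 2 := by rwa [mul_comm]
  have ha' := le_half_of_sq_mul_le hC hz ha (norm_nonneg _) hab hA' hr₁ hr₂ hω₂
    (im_sub_im_le_norm_sub_add hωt₁) ha₂
  have hb' := le_half_of_sq_mul_le hC hz hb (norm_nonneg _) hba hB' hr₂ hr₁ hω₁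
    (im_sub_im_le_norm_sub_add hωt₂) hb₂
  have hR₁ : ‖r₁‖ ≤ √(‖r₁‖ ^ 2 + ‖r₂‖ ^ 2) := Real.le_sqrt_of_sq_le (by nlinarith)
  have hR₂ : ‖r₂‖ ≤ √(‖r₁‖ ^ 2 + ‖r₂‖ ^ 2) := Real.le_sqrt_of_sq_le (by nlinarith)
  exact ⟨le_two_mul_of_one_sub_mul_mul_le ha' hb hb' (norm_nonneg _) hA' hR₁ hR₂ (norm_nonneg _),
    le_two_mul_of_one_sub_mul_mul_le hb' ha ha' (norm_nonneg _) hB' hR₂ hR₁ (norm_nonneg _)⟩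

theorem stability_for_large_eta_general
    (μ₁ μ₂ : Measure ℝ) (hp₁ : IsProbabilityMeasure μ₁) (hp₂ : IsProbabilityMeasure μ₂)
    (ω₁ ω₂ : ℂ → ℂ) (hsub : IsSubordination μ₁ μ₂ ω₁ ω₂)
    (ηt : ℝ)
    (ωt₁ ωt₂ rt₁ rt₂ : ℂ → ℂ)
    (C : ℝ) (hC : 0 < C)
    (hb₁ : ∀ z : ℂ, ηt ≤ z.im → |(ωt₁ z).im - z.im| ≤ C)
    (hb₂ : ∀ z : ℂ, ηt ≤ z.im → |(ωt₂ z).im - z.im| ≤ C)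
    (hb₃ : ∀ z : ℂ, ηt ≤ z.im → ‖rt₁ z‖ ≤ C)
    (hb₄ : ∀ z : ℂ, ηt ≤ z.im → ‖rt₂ z‖ ≤ C)
    (heq₁ : ∀ z : ℂ, ηt ≤ z.im → Fm μ₁ (ωt₂ z) - ωt₁ z - ωt₂ z + z = rt₁ z)
    (heq₂ : ∀ z : ℂ, ηt ≤ z.im → Fm μ₂ (ωt₁ z) - ωt₁ z - ωt₂ z + z = rt₂ z) :
    ∃ η₀ : ℝ, ηt ≤ η₀ ∧ ∀ z : ℂ, η₀ ≤ z.im →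
      ‖ωt₁ z - ω₁ z‖ ≤
        2 * Real.sqrt (‖rt₁ z‖ ^ 2 + ‖rt₂ z‖ ^ 2) ∧
      ‖ωt₂ z - ω₂ z‖ ≤
        2 * Real.sqrt (‖rt₁ z‖ ^ 2 + ‖rt₂ z‖ ^ 2) := by
  refine ⟨max ηt (8 * C), le_max_left _ _, fun z hz => ?_⟩
  have hzt : ηt ≤ z.im := (le_max_left _ _).trans hz
  have hzC : 8 * C ≤ z.im := (le_max_right _ _).trans hz
  have hzU : z ∈ UHP := show 0 < z.im by linarith
  exact norm_sub_subordination_le μ₁ μ₂ hC hzC (hsub.imge₁ z hzU) (hsub.imge₂ z hzU)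
    (hsub.sumeq z hzU) ((hsub.subeq z hzU).symm.trans (hsub.sumeq z hzU)) (hb₁ z hzt)
    (hb₂ z hzt) (hb₃ z hzt) (hb₄ z hzt) (heq₁ z hzt) (heq₂ z hzt)

/-- **Stability of the subordination system for large imaginary part** (Lemma A.2). -/
theorem stability_for_large_eta
    (μ₁ μ₂ : Measure ℝ) (hp₁ : IsProbabilityMeasure μ₁) (hp₂ : IsProbabilityMeasure μ₂)
    (hnd₁ : ∀ x : ℝ, μ₁ ≠ Measure.dirac x) (hnd₂ : ∀ x : ℝ, μ₂ ≠ Measure.dirac x)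
    (ω₁ ω₂ : ℂ → ℂ) (hsub : IsSubordination μ₁ μ₂ ω₁ ω₂)
    (ηt : ℝ) (hηt : 0 < ηt)
    (ωt₁ ωt₂ rt₁ rt₂ : ℂ → ℂ)
    (han₁ : DifferentiableOn ℂ ωt₁ {z : ℂ | ηt ≤ z.im})
    (han₂ : DifferentiableOn ℂ ωt₂ {z : ℂ | ηt ≤ z.im})
    (han₃ : DifferentiableOn ℂ rt₁ {z : ℂ | ηt ≤ z.im})
    (han₄ : DifferentiableOn ℂ rt₂ {z : ℂ | ηt ≤ z.im})
    (C : ℝ) (hC : 0 < C)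
    (hb₁ : ∀ z : ℂ, ηt ≤ z.im → |(ωt₁ z).im - z.im| ≤ C)
    (hb₂ : ∀ z : ℂ, ηt ≤ z.im → |(ωt₂ z).im - z.im| ≤ C)
    (hb₃ : ∀ z : ℂ, ηt ≤ z.im → ‖rt₁ z‖ ≤ C)
    (hb₄ : ∀ z : ℂ, ηt ≤ z.im → ‖rt₂ z‖ ≤ C)
    (heq₁ : ∀ z : ℂ, ηt ≤ z.im → Fm μ₁ (ωt₂ z) - ωt₁ z - ωt₂ z + z = rt₁ z)
    (heq₂ : ∀ z : ℂ, ηt ≤ z.im → Fm μ₂ (ωt₁ z) - ωt₁ z - ωt₂ z + z = rt₂ z) :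
    ∃ η₀ : ℝ, ηt ≤ η₀ ∧ ∀ z : ℂ, η₀ ≤ z.im →
      ‖ωt₁ z - ω₁ z‖ ≤
        2 * Real.sqrt (‖rt₁ z‖ ^ 2 + ‖rt₂ z‖ ^ 2) ∧
      ‖ωt₂ z - ω₂ z‖ ≤
        2 * Real.sqrt (‖rt₁ z‖ ^ 2 + ‖rt₂ z‖ ^ 2) :=
  stability_for_large_eta_general μ₁ μ₂ hp₁ hp₂ ω₁ ω₂ hsub ηt ωt₁ ωt₂ rt₁ rt₂ C hC hb₁ hb₂ hb₃ hb₄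
    heq₁ heq₂

end RMT
end
end
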